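/- arXiv:1708.05813 — 7 statements merged into one kernel-verified Lean document; each statement's English description precedes it below -/
import Mathlib

section
/- Let A be an integral domain containing ℚ and D a locally nilpotent derivation on A. If D(a) = b·a for some a, b ∈ A with a ≠ 0, then b = 0. -/
open Finset TensorProduct

section Aux

variable {A : Type*} [CommRing A] [Algebra ℚ A] (D : Derivation ℚ A A)

lemma aux_vanish (x : A) {m k : ℕ} (h : (⇑D)^[m] x = 0) (hk : m ≤ k) :
    (⇑D)^[k] x = 0 := by
  obtain ⟨j, rfl⟩ := Nat.exists_eq_add_of_le hk
  rw [add_comm, Function.iterate_add_apply, h]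
  exact Function.iterate_fixed (by simp) j

lemma aux_leibniz (x y : A) (n : ℕ) :
    (⇑D)^[n] (x * y) =
      ∑ k ∈ range (n + 1), n.choose k • ((⇑D)^[k] x * (⇑D)^[n - k] y) := by
  set d := D.toLinearMap with hd
  set L : A ⊗[ℚ] A →ₗ[ℚ] A ⊗[ℚ] A := TensorProduct.map d LinearMap.id with hL
  set R : A ⊗[ℚ] A →ₗ[ℚ] A ⊗[ℚ] A := TensorProduct.map LinearMap.id d with hR
  have hcomm : Commute L R := by
    apply TensorProduct.ext'
    intro u v
    simp [hL, hR, Commute, SemiconjBy, Module.End.mul_eq_comp]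
  have hmul : ∀ t : A ⊗[ℚ] A,
      LinearMap.mul' ℚ A ((L + R) t) = d (LinearMap.mul' ℚ A t) := by
    intro t
    induction t using TensorProduct.induction_on with
    | zero => simp
    | tmul u v =>
        simp only [hL, hR, LinearMap.add_apply, TensorProduct.map_tmul,
          LinearMap.id_coe, id_eq, map_add, LinearMap.mul'_apply, hd,
          Derivation.coeFn_coe]
        have := D.leibniz u v
        simp only [smul_eq_mul] at this
        rw [this]; ring
    | add s t hs ht =>
        simp only [map_add, LinearMap.add_apply] at hs ht ⊢
        rw [hs, ht]
  have hmuln : ∀ (n : ℕ) (t : A ⊗[ℚ] A),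
      LinearMap.mul' ℚ A (((L + R) ^ n) t) = (d ^ n) (LinearMap.mul' ℚ A t) := by
    intro n
    induction n with
    | zero => simp
    | succ n ih =>
        intro t
        rw [pow_succ', pow_succ', Module.End.mul_apply, Module.End.mul_apply, hmul, ih]
  have hiter : ∀ (m : ℕ) (z : A), (d ^ m) z = (⇑D)^[m] z := by
    intro m z
    rw [Module.End.pow_apply, hd, Derivation.coeFn_coe]
  have key := hmuln n (x ⊗ₜ[ℚ] y)
  rw [hcomm.add_pow, LinearMap.sum_apply] at key
  have hterm : ∀ k : ℕ, (L ^ k) ((R ^ (n - k)) (x ⊗ₜ[ℚ] y))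
      = (⇑D)^[k] x ⊗ₜ[ℚ] (⇑D)^[n - k] y := by
    intro k
    rw [hL, hR, TensorProduct.map_pow, TensorProduct.map_pow]
    simp only [TensorProduct.map_tmul, Module.End.pow_apply, LinearMap.id_coe,
      Function.iterate_id, id_eq]
    rw [← hiter k x, ← hiter (n - k) y]
    simp [Module.End.pow_apply]
  rw [LinearMap.mul'_apply] at key
  rw [← hiter n (x * y), ← key, map_sum]
  refine Finset.sum_congr rfl fun k hk => ?_
  rw [Module.End.mul_apply, Module.End.mul_apply, Module.End.natCast_apply,
    map_nsmul, map_nsmul, map_nsmul, hterm, LinearMap.mul'_apply]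

end Aux

theorem stmt0 (A : Type*) [CommRing A] [IsDomain A] [Algebra ℚ A]
    (D : Derivation ℚ A A)
    (hln : ∀ a : A, ∃ m : ℕ, 1 ≤ m ∧ (⇑D)^[m] a = 0)
    (a b : A) (ha : a ≠ 0) (hab : D a = b * a) : b = 0 := by
  haveI : CharZero A := charZero_of_injective_algebraMap (algebraMap ℚ A).injective
  by_contra hb
  -- existence of vanishing iterate for any element
  have hex : ∀ x : A, ∃ m : ℕ, (⇑D)^[m] x = 0 := fun x => by
    obtain ⟨m, _, hm⟩ := hln x; exact ⟨m, hm⟩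
  -- degree function facts for nonzero elements
  have hdeg : ∀ x : A, x ≠ 0 → ∃ dx : ℕ, (⇑D)^[dx] x ≠ 0 ∧ ∀ j, dx < j → (⇑D)^[j] x = 0 := by
    intro x hx
    classical
    have h := hex x
    set m := Nat.find h with hm
    have hm1 : 1 ≤ m := by
      rcases Nat.eq_zero_or_pos m with h0 | h1
      · exfalso; apply hx
        have := Nat.find_spec h
        rwa [← hm, h0] at this
      · exact h1
    refine ⟨m - 1, ?_, ?_⟩
    · exact Nat.find_min h (by omega)
    · intro j hj
      exact aux_vanish D x (Nat.find_spec h) (by omega)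
  -- the sequence c n with D^[n] a = c n * a
  set c : ℕ → A := fun n => Nat.rec (1 : A) (fun _ cn => D cn + b * cn) n with hc
  have hc0 : c 0 = 1 := rfl
  have hcs : ∀ n, c (n + 1) = D (c n) + b * c n := fun n => rfl
  have hDa : ∀ n, (⇑D)^[n] a = c n * a := by
    intro n
    induction n with
    | zero => simp [hc0]
    | succ n ih =>
        rw [Function.iterate_succ_apply', ih, hcs]
        have := D.leibniz (c n) a
        simp only [smul_eq_mul] at this
        rw [this, hab]; ring
  -- main claim: c n ≠ 0 for all n
  have hcne : ∀ n, c n ≠ 0 := by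
    intro n
    induction n with
    | zero => rw [hc0]; exact one_ne_zero
    | succ n ih =>
        obtain ⟨db, hdb1, hdb2⟩ := hdeg b hb
        obtain ⟨dc, hdc1, hdc2⟩ := hdeg (c n) ih
        set N := db + dc with hN
        -- D^[N] (b * c n) is the single surviving Leibniz term
        have hbc : (⇑D)^[N] (b * c n) = N.choose db • ((⇑D)^[db] b * (⇑D)^[dc] (c n)) := by
          rw [aux_leibniz D b (c n) N]
          rw [Finset.sum_eq_single db]
          · have hNd : N - db = dc := by omega
            rw [hNd]
          · intro k hk hkne
            rcases lt_or_gt_of_ne hkne with hlt | hgt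
            · have : (⇑D)^[N - k] (c n) = 0 := hdc2 _ (by omega)
              rw [this, mul_zero, smul_zero]
            · have : (⇑D)^[k] b = 0 := hdb2 _ (by omega)
              rw [this, zero_mul, smul_zero]
          · intro hmem
            exact absurd (Finset.mem_range.mpr (by omega)) hmem
        have hbcne : (⇑D)^[N] (b * c n) ≠ 0 := by
          rw [hbc]
          have h1 : (N.choose db : A) ≠ 0 := by
            have : 0 < N.choose db := Nat.choose_pos (by omega)
            exact_mod_cast Nat.cast_ne_zero.mpr (by omega)
          have h2 : (⇑D)^[db] b * (⇑D)^[dc] (c n) ≠ 0 := mul_ne_zero hdb1 hdc1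
          rw [nsmul_eq_mul]
          exact mul_ne_zero h1 h2
        have hDcn : (⇑D)^[N] (D (c n)) = 0 := by
          rw [← Function.iterate_succ_apply]
          exact hdc2 _ (by omega)
        intro hzero
        apply hbcne
        have : (⇑D)^[N] (c (n + 1)) = 0 := by rw [hzero]; simp
        rw [hcs] at this
        have hadd : (⇑D)^[N] (D (c n) + b * c n)
            = (⇑D)^[N] (D (c n)) + (⇑D)^[N] (b * c n) := by
          have : ∀ (m : ℕ) (u v : A), (⇑D)^[m] (u + v) = (⇑D)^[m] u + (⇑D)^[m] v := by
            intro m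
            induction m with
            | zero => intro u v; simp
            | succ m ihm =>
                intro u v
                simp only [Function.iterate_succ_apply, map_add, ihm]
          exact this N _ _
        rw [hadd, hDcn, zero_add] at this
        exact this
  -- conclude
  obtain ⟨m, hm1, hm2⟩ := hln a
  have := hDa m
  rw [hm2] at this
  exact hcne m (by
    rcases mul_eq_zero.mp this.symm with h | h
    · exact h
    · exact absurd h ha)
end

section
/- Let A be a commutative ℚ-algebra and a_1, …, a_n ∈ A. If there exists r ≥ 0 such that a_1^{r+i} + a_2^{r+i} + ⋯ + a_n^{r+i} = 0 for all 1 ≤ i ≤ n, then each a_j is nilpotent. -/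
/-!
By Newton's identities, for `k > n` the power sum `p_k` is a combination of `p_{k-1}, …, p_{k-n}`
with coefficients `± e_i` (as `e_i = 0` for `i > n`), so `n` consecutive vanishing power sums force
`p_k = 0` for all `k > r`. Hence the elements `b_j = a_j ^ (r + 1)` have all positive power sums
zero. Over `ℚ` we may divide by `k` in `k e_k = ± ∑ (-1)^i e_i p_{k-i}`, so all `e_k(b)` with
`k ≥ 1` vanish, i.e. `∏ (X - b_j) = X ^ n`, and every `b_j` is a root of `X ^ n`.
-/

open MvPolynomial Finset

namespace Multiset

variable {R : Type*} [CommRing R]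

theorem prod_X_sub_C_eq_X_pow_of_esymm_eq_zero (s : Multiset R)
    (hs : ∀ k, 0 < k → s.esymm k = 0) :
    (s.map fun t => Polynomial.X - Polynomial.C t).prod = Polynomial.X ^ card s := by
  rw [prod_X_sub_X_eq_sum_esymm, Finset.sum_eq_single 0]
  · simp [Multiset.esymm]
  · intro k _ hk
    simp [hs k (Nat.pos_of_ne_zero hk)]
  · simp

theorem pow_card_eq_zero_of_esymm_eq_zero {s : Multiset R} (hs : ∀ k, 0 < k → s.esymm k = 0)
    {x : R} (hx : x ∈ s) : x ^ card s = 0 := by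
  have hdvd := dvd_prod (mem_map_of_mem (fun t => Polynomial.X - Polynomial.C t) hx)
  rw [prod_X_sub_C_eq_X_pow_of_esymm_eq_zero s hs, Polynomial.dvd_iff_isRoot] at hdvd
  simpa using hdvd

end Multiset

section PowerSums

variable {σ A : Type*} [Fintype σ] [CommRing A]

theorem MvPolynomial.aeval_psum (a : σ → A) (k : ℕ) :
    aeval a (psum σ ℤ k) = ∑ i, a i ^ k := by
  simp [psum]

theorem MvPolynomial.aeval_esymm_eq_zero_of_card_lt (a : σ → A) {k : ℕ}
    (hk : Fintype.card σ < k) : aeval a (esymm σ ℤ k) = 0 := by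
  rw [aeval_esymm_eq_multiset_esymm, Multiset.esymm, Multiset.powersetCard_eq_empty _ (by simpa),
    Multiset.map_zero, Multiset.sum_zero]

theorem sum_pow_eq_zero_of_consecutive_sum_pow_eq_zero (a : σ → A) (r : ℕ)
    (h : ∀ i, 1 ≤ i → i ≤ Fintype.card σ → ∑ j, a j ^ (r + i) = 0) {k : ℕ} (hk : r < k) :
    ∑ j, a j ^ k = 0 := by
  induction k using Nat.strong_induction_on with
  | _ k ih =>
  by_cases hkn : k ≤ r + Fintype.card σ
  · simpa [Nat.add_sub_cancel' hk.le] using h (k - r) (by omega) (by omega)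
  have newton := congrArg (aeval a) (psum_eq_mul_esymm_sub_sum σ ℤ k (by omega))
  simp only [map_sub, map_mul, map_pow, map_neg, map_one, map_natCast, map_sum, aeval_psum,
    aeval_esymm_eq_zero_of_card_lt a (show Fintype.card σ < k by omega), mul_zero, zero_sub]
    at newton
  rw [newton, neg_eq_zero]
  refine sum_eq_zero fun ⟨i, l⟩ hil => ?_
  simp only [mem_filter, HasAntidiagonal.mem_antidiagonal, Set.mem_Ioo] at hil
  rcases le_or_gt i (Fintype.card σ) with hi | hi
  · rw [ih l (by omega) (by omega), mul_zero]
  · rw [aeval_esymm_eq_zero_of_card_lt a hi, mul_zero, zero_mul]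

variable [Algebra ℚ A]

theorem aeval_esymm_eq_zero_of_sum_pow_eq_zero (a : σ → A)
    (h : ∀ m, 0 < m → ∑ j, a j ^ m = 0) {k : ℕ} (hk : 0 < k) : aeval a (esymm σ ℤ k) = 0 := by
  have newton := congrArg (aeval a) (mul_esymm_eq_sum σ ℤ k)
  simp only [map_mul, map_pow, map_neg, map_one, map_natCast, map_sum, aeval_psum] at newton
  rw [sum_eq_zero, mul_zero] at newton
  · have hk_unit : IsUnit (k : A) := by
      simpa using (IsUnit.mk0 (k : ℚ) (by positivity)).map (algebraMap ℚ A)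
    exact hk_unit.mul_right_eq_zero.mp newton
  rintro ⟨i, l⟩ hil
  simp only [mem_filter, HasAntidiagonal.mem_antidiagonal] at hil
  rw [h l (by omega), mul_zero]

theorem pow_card_eq_zero_of_sum_pow_eq_zero (a : σ → A) (h : ∀ m, 0 < m → ∑ j, a j ^ m = 0)
    (j : σ) : a j ^ Fintype.card σ = 0 := by
  simpa using Multiset.pow_card_eq_zero_of_esymm_eq_zero (s := univ.val.map a)
    (fun k hk => by
      rw [← aeval_esymm_eq_multiset_esymm σ ℤ]
      exact aeval_esymm_eq_zero_of_sum_pow_eq_zero a h hk)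
    (Multiset.mem_map_of_mem a (mem_univ_val j))

theorem isNilpotent_of_consecutive_sum_pow_eq_zero (a : σ → A) (r : ℕ)
    (h : ∀ i, 1 ≤ i → i ≤ Fintype.card σ → ∑ j, a j ^ (r + i) = 0) (j : σ) :
    IsNilpotent (a j) := by
  refine ⟨(r + 1) * Fintype.card σ, ?_⟩
  rw [pow_mul]
  refine pow_card_eq_zero_of_sum_pow_eq_zero (fun j => a j ^ (r + 1)) (fun m hm => ?_) j
  simp only [← pow_mul]
  exact sum_pow_eq_zero_of_consecutive_sum_pow_eq_zero a r h (by nlinarith)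

end PowerSums

theorem stmt3 (A : Type*) [CommRing A] [Algebra ℚ A] (n : ℕ) (a : Fin n → A)
    (r : ℕ) (h : ∀ i : ℕ, 1 ≤ i → i ≤ n → ∑ j, a j ^ (r + i) = 0) :
    ∀ j, IsNilpotent (a j) :=
  isNilpotent_of_consecutive_sum_pow_eq_zero a r (by simpa using h)
end

section
/- Let A be an integral domain containing ℚ and a_1, …, a_n ∈ A. If there exists r ≥ 0 such that a_1^{r+i} + ⋯ + a_n^{r+i} = 0 for all 1 ≤ i ≤ n, then all a_j = 0. -/
theorem stmt4 (A : Type*) [CommRing A] [IsDomain A] [Algebra ℚ A] (n : ℕ)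
    (a : Fin n → A) (r : ℕ)
    (h : ∀ i : ℕ, 1 ≤ i → i ≤ n → ∑ j, a j ^ (r + i) = 0) :
    ∀ j, a j = 0 := by
  haveI : CharZero A := charZero_of_injective_algebraMap (algebraMap ℚ A).injective
  by_contra hcon
  push_neg at hcon
  obtain ⟨j0, hj0⟩ := hcon
  classical
  set s : Finset A := (Finset.univ.image a).filter (· ≠ 0) with hs
  have hm : s.card ≤ n := by
    calc s.card ≤ (Finset.univ.image a).card := Finset.card_filter_le _ _
    _ ≤ (Finset.univ : Finset (Fin n)).card := Finset.card_image_le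
    _ = n := by simp
  have key : ∀ i : ℕ, 1 ≤ i → i ≤ n →
      ∑ v ∈ s, ((Finset.univ.filter (fun j => a j = v)).card : A) * v ^ (r + i) = 0 := by
    intro i hi1 hin
    have h1 : ∑ j, a j ^ (r + i)
        = ∑ v ∈ Finset.univ.image a,
            ((Finset.univ.filter (fun j => a j = v)).card : A) * v ^ (r + i) := by
      rw [Finset.sum_comp (fun v : A => v ^ (r + i)) a]
      simp [nsmul_eq_mul]
    have h2 : ∑ v ∈ s, ((Finset.univ.filter (fun j => a j = v)).card : A) * v ^ (r + i)
        = ∑ v ∈ Finset.univ.image a,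
            ((Finset.univ.filter (fun j => a j = v)).card : A) * v ^ (r + i) := by
      apply Finset.sum_filter_of_ne
      intro v _ hv
      intro hv0
      apply hv
      rw [hv0, zero_pow (by omega), mul_zero]
    rw [h2, ← h1]
    exact h i hi1 hin
  set m := s.card with hmdef
  let e : s ≃ Fin m := s.equivFin
  let c : Fin m → A := fun i => (e.symm i : A)
  have hcmem : ∀ i, c i ∈ s := fun i => (e.symm i).2
  have hcne : ∀ i, c i ≠ 0 := by
    intro i
    have := hcmem i
    rw [hs, Finset.mem_filter] at this
    exact this.2
  have hcinj : Function.Injective c := by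
    intro i j hij
    have : (e.symm i : A) = (e.symm j : A) := hij
    exact e.symm.injective (Subtype.ext this)
  let k : Fin m → A := fun i => ((Finset.univ.filter (fun j => a j = c i)).card : A)
  let M : Matrix (Fin m) (Fin m) A := Matrix.of fun i j => c j ^ (r + 1 + (i : ℕ))
  have hMk : M.mulVec k = 0 := by
    funext i
    have hkey := key (1 + (i : ℕ)) (by omega) (by omega)
    have hsum : ∑ j : Fin m, c j ^ (r + (1 + (i : ℕ))) * k j
        = ∑ v ∈ s, ((Finset.univ.filter (fun j => a j = v)).card : A) * v ^ (r + (1 + (i : ℕ))) := by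
      rw [← Finset.sum_coe_sort s
        (fun v => ((Finset.univ.filter (fun j => a j = v)).card : A) * v ^ (r + (1 + (i : ℕ))))]
      rw [← Equiv.sum_comp e.symm
        (fun v : s => ((Finset.univ.filter (fun j => a j = (v : A))).card : A) * (v : A) ^ (r + (1 + (i : ℕ))))]
      exact Finset.sum_congr rfl fun j _ => mul_comm _ _
    show ∑ j : Fin m, M i j * k j = 0
    have : ∀ j : Fin m, M i j * k j = c j ^ (r + (1 + (i : ℕ))) * k j := by
      intro j
      show c j ^ (r + 1 + (i : ℕ)) * k j = _
      congr 2
      omega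
    rw [Finset.sum_congr rfl fun j _ => this j, hsum]
    exact hkey
  have hdet : M.det ≠ 0 := by
    have hfac : M = (Matrix.vandermonde c).transpose * Matrix.diagonal (fun j => c j ^ (r + 1)) := by
      funext i j
      rw [Matrix.mul_apply]
      rw [Finset.sum_eq_single j]
      · show c j ^ (r + 1 + (i : ℕ)) = _
        simp only [Matrix.transpose_apply, Matrix.vandermonde_apply, Matrix.diagonal_apply_eq]
        rw [← pow_add]
        congr 1
        omega
      · intro b _ hb
        simp [Matrix.diagonal_apply_ne _ hb]
      · simp
    rw [hfac, Matrix.det_mul, Matrix.det_transpose, Matrix.det_vandermonde,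
      Matrix.det_diagonal]
    apply mul_ne_zero
    · apply Finset.prod_ne_zero_iff.mpr
      intro i _
      apply Finset.prod_ne_zero_iff.mpr
      intro j hj
      have hij : i < j := Finset.mem_Ioi.mp hj
      exact sub_ne_zero_of_ne fun hc => absurd hij (by rw [hcinj hc]; exact lt_irrefl i)
    · exact Finset.prod_ne_zero_iff.mpr fun i _ => pow_ne_zero _ (hcne i)
  have hk0 : ∀ i, k i = 0 := by
    intro i
    have h1 : (M.adjugate).mulVec (M.mulVec k) = M.det • k := by
      rw [Matrix.mulVec_mulVec, Matrix.adjugate_mul, Matrix.smul_mulVec,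
        Matrix.one_mulVec]
    rw [hMk, Matrix.mulVec_zero] at h1
    have := congrFun h1.symm i
    simp only [Pi.smul_apply, smul_eq_mul, Pi.zero_apply] at this
    rcases mul_eq_zero.mp this with h' | h'
    · exact absurd h' hdet
    · exact h'
  -- contradiction
  have hv0 : a j0 ∈ s := by
    rw [hs, Finset.mem_filter]
    exact ⟨Finset.mem_image_of_mem a (Finset.mem_univ j0), hj0⟩
  set i0 : Fin m := e ⟨a j0, hv0⟩ with hi0
  have hc0 : c i0 = a j0 := by simp [c, hi0]
  have : ((Finset.univ.filter (fun j => a j = c i0)).card : A) = 0 := hk0 i0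
  rw [Nat.cast_eq_zero, Finset.card_eq_zero, Finset.filter_eq_empty_iff] at this
  exact this (Finset.mem_univ j0) hc0.symm
end

section
/- Let k be a field of characteristic p > 0 and D = d/dt the standard derivation on k[t]. Then t^{p−1} is not in the image of D, while 1 is in the image of D; hence the image of D is not a Mathieu–Zhao space of k[t]. -/
open Polynomial

def IsMathieuZhaoSet {A : Type*} [Semiring A] (M : Set A) : Prop :=
  ∀ a : A, (∃ N : ℕ, ∀ m ≥ N, a ^ m ∈ M) → ∀ b : A, ∃ N : ℕ, ∀ m ≥ N, b * a ^ m ∈ M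

theorem IsMathieuZhaoSet.eq_univ_of_one_mem {A : Type*} [Semiring A] {M : Set A}
    (hM : IsMathieuZhaoSet M) (h1 : (1 : A) ∈ M) : M = Set.univ := by
  refine Set.eq_univ_of_forall fun b => ?_
  obtain ⟨N, hN⟩ := hM 1 ⟨0, fun _ _ => by rwa [one_pow]⟩ b
  simpa using hN N le_rfl

theorem Polynomial.one_mem_range_derivative (R : Type*) [Semiring R] :
    (1 : R[X]) ∈ Set.range (derivative (R := R)) :=
  ⟨X, derivative_X⟩

theorem Polynomial.X_pow_sub_one_notMem_range_derivative (R : Type*) [Semiring R] [Nontrivial R]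
    (p : ℕ) [CharP R p] (hp : p ≠ 0) :
    (X : R[X]) ^ (p - 1) ∉ Set.range (derivative (R := R)) := by
  rintro ⟨f, hf⟩
  have hcoeff := congrArg (coeff · (p - 1)) hf
  -- The coefficient of `X ^ (p - 1)` in `derivative f` is `p` times a coefficient of `f`, hence zero.
  simp only [coeff_derivative, coeff_X_pow_self] at hcoeff
  rw [← Nat.cast_succ, Nat.succ_eq_add_one, Nat.sub_add_cancel (Nat.one_le_iff_ne_zero.mpr hp),
    CharP.cast_eq_zero, mul_zero] at hcoeff
  exact zero_ne_one hcoeff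

theorem stmt7 (k : Type*) [Field k] (p : ℕ) [Fact p.Prime] [CharP k p] :
    (Polynomial.X ^ (p - 1) ∉ Set.range (⇑(Polynomial.derivative (R := k)))) ∧
    ((1 : Polynomial k) ∈ Set.range (⇑(Polynomial.derivative (R := k)))) ∧
    ¬ (∀ a : Polynomial k,
        (∃ N : ℕ, ∀ m ≥ N, a ^ m ∈ Set.range (⇑(Polynomial.derivative (R := k)))) →
        ∀ b : Polynomial k, ∃ N : ℕ, ∀ m ≥ N,
          b * a ^ m ∈ Set.range (⇑(Polynomial.derivative (R := k)))) := by
  have hX := X_pow_sub_one_notMem_range_derivative k p (Fact.out : p.Prime).ne_zero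
  have h1 := one_mem_range_derivative k
  refine ⟨hX, h1, fun hMZ => hX ?_⟩
  have huniv : Set.range (derivative (R := k)) = Set.univ :=
    IsMathieuZhaoSet.eq_univ_of_one_mem hMZ h1
  exact huniv ▸ Set.mem_univ _
end

section
/- Let k be a field of characteristic p > 0, φ the k-algebra endomorphism of k[t] with φ(t) = t + 1, and δ = 1 − φ. Then t^{p−1} ∉ im δ, i.e., there is no u ∈ k[t] with t^{p−1} = u(t) − u(t+1). -/
theorem stmt8 (k : Type*) [Field k] (p : ℕ) [Fact p.Prime] [CharP k p] :
    ¬ ∃ u : Polynomial k,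
        Polynomial.X ^ (p - 1) = u - u.comp (Polynomial.X + 1) := by
  rintro ⟨u, hu⟩
  have hp : p.Prime := Fact.out
  have key : ∀ n : ℕ, ((n : k)) ^ (p - 1) = u.eval (n : k) - u.eval ((n + 1 : ℕ) : k) := by
    intro n
    have := congrArg (Polynomial.eval (n : k)) hu
    simpa [Polynomial.eval_comp, add_comm] using this
  -- telescoping sum of RHS
  have hsum : ∑ n ∈ Finset.range p, ((n : k)) ^ (p - 1)
      = u.eval ((0 : ℕ) : k) - u.eval ((p : ℕ) : k) := by
    rw [eq_comm, ← Finset.sum_range_sub' (fun m : ℕ => u.eval (m : k)) p]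
    exact Finset.sum_congr rfl fun n _ => (key n).symm
  have hzero : ((p : ℕ) : k) = 0 := CharP.cast_eq_zero k p
  have hRHS : ∑ n ∈ Finset.range p, ((n : k)) ^ (p - 1) = 0 := by
    rw [hsum, hzero]; simp
  -- Fermat: each nonzero term is 1
  have hone : ∀ n ∈ Finset.range p, n ≠ 0 → ((n : k)) ^ (p - 1) = 1 := by
    intro n hn hn0
    have hlt : n < p := Finset.mem_range.mp hn
    have hz : (n : ZMod p) ≠ 0 := by
      rw [Ne, ZMod.natCast_eq_zero_iff]
      intro h
      exact hn0 (Nat.eq_zero_of_dvd_of_lt h hlt)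
    have hfermat : ((n : ZMod p)) ^ (p - 1) = 1 := ZMod.pow_card_sub_one_eq_one hz
    have := congrArg (ZMod.castHom (dvd_refl p) k) hfermat
    simpa using this
  have hne : p - 1 ≠ 0 := Nat.sub_ne_zero_of_lt hp.one_lt
  have hLHS : ∑ n ∈ Finset.range p, ((n : k)) ^ (p - 1) = (p : k) - 1 := by
    have h1 : ∑ n ∈ Finset.range p, ((n : k)) ^ (p - 1)
        = ∑ n ∈ Finset.range p, ((1 : k) - if n = 0 then 1 else 0) := by
      refine Finset.sum_congr rfl fun n hn => ?_
      by_cases h : n = 0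
      · simp [h, zero_pow hne]
      · simp [h, hone n hn h]
    rw [h1, Finset.sum_sub_distrib, Finset.sum_ite_eq' (Finset.range p) 0 (fun _ => (1 : k))]
    simp [Finset.mem_range, hp.pos]
  rw [hRHS, hzero] at hLHS
  simp at hLHS
end

section
/- Let A be a local integral domain containing a field k of characteristic zero and φ a locally finite k-algebra endomorphism of A. If φ(v) = c·v for some nonzero v ∈ A and nonzero c ∈ k, then c is a root of unity. -/
theorem stmt13 (k : Type*) [Field k] [CharZero k] (A : Type*) [CommRing A] [IsDomain A]
    [IsLocalRing A] [Algebra k A] (φ : A →ₐ[k] A)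
    (hlf : ∀ a : A, (Submodule.span k (Set.range fun m : ℕ => (φ ^ (m + 1)) a)).FG)
    (v : A) (c : k) (hv : v ≠ 0) (hc : c ≠ 0) (hφv : φ v = c • v) :
    ∃ d : ℕ, 1 ≤ d ∧ c ^ d = 1 := by
  classical
  by_contra hcon
  push_neg at hcon
  have hcpow : ∀ n : ℕ, c ^ n ≠ 0 := fun n => pow_ne_zero n hc
  -- injectivity of n ↦ c ^ n
  have hinj : Function.Injective fun n : ℕ => c ^ n := by
    have key : ∀ i j : ℕ, i < j → c ^ i = c ^ j → False := by
      intro i j hij h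
      have h1 : c ^ i * c ^ (j - i) = c ^ j := by
        rw [← pow_add, Nat.add_sub_cancel' (le_of_lt hij)]
      have h2 : c ^ (j - i) = 1 :=
        mul_left_cancel₀ (hcpow i) (by rw [h1, ← h, mul_one])
      exact hcon _ (by omega) h2
    intro i j h
    simp only at h
    rcases lt_trichotomy i j with hlt | heq | hgt
    · exact absurd h (fun h => key i j hlt h)
    · exact heq
    · exact absurd h.symm (fun h => key j i hgt h)
  -- powers of v are eigenvectors, hence linearly independent, hence v transcendental
  have hpow : ∀ n : ℕ, φ (v ^ n) = c ^ n • v ^ n := by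
    intro n; rw [map_pow, hφv, smul_pow]
  have hli : LinearIndependent k fun n : ℕ => v ^ n := by
    refine Module.End.eigenvectors_linearIndependent' φ.toLinearMap (fun n => c ^ n) hinj
      (fun n => v ^ n) (fun n => ⟨?_, pow_ne_zero n hv⟩)
    exact Module.End.mem_eigenspace_iff.2 (hpow n)
  have htr : Transcendental k v := by
    rw [transcendental_iff]
    intro p hp
    rw [Polynomial.aeval_eq_sum_range] at hp
    have hz := linearIndependent_iff'.1 hli (Finset.range (p.natDegree + 1))
      (fun i => p.coeff i) hp
    ext n
    by_cases hn : n < p.natDegree + 1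
    · simpa using hz n (Finset.mem_range.2 hn)
    · have hd : p.natDegree < n := by omega
      simp [Polynomial.coeff_eq_zero_of_natDegree_lt hd]
  -- uniqueness of the "bad" scalar
  have key : ∀ a b : k, ¬IsUnit (v - algebraMap k A a) → ¬IsUnit (v - algebraMap k A b) →
      a = b := by
    intro a b ha hb
    have ha' : v - algebraMap k A a ∈ IsLocalRing.maximalIdeal A := ha
    have hb' : v - algebraMap k A b ∈ IsLocalRing.maximalIdeal A := hb
    have hmem : algebraMap k A (b - a) ∈ IsLocalRing.maximalIdeal A := by
      have h := sub_mem ha' hb'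
      have e : (v - algebraMap k A a) - (v - algebraMap k A b) = algebraMap k A (b - a) := by
        rw [map_sub]; ring
      rwa [e] at h
    by_contra hne
    exact hmem (((isUnit_iff_ne_zero.2 (sub_ne_zero.2 fun h => hne h.symm)).map
      (algebraMap k A)))
  -- choose a good scalar l
  have hEx : ∃ l : k, l ≠ 0 ∧ ∀ n : ℕ, IsUnit (v - algebraMap k A (l / c ^ n)) := by
    by_cases h : ∀ n : ℕ, IsUnit (v - algebraMap k A (1 / c ^ n))
    · exact ⟨1, one_ne_zero, h⟩
    push_neg at h
    obtain ⟨n0, hn0⟩ := h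
    set μ : k := 1 / c ^ n0 with hμdef
    have hμ0 : μ ≠ 0 := one_div_ne_zero (hcpow n0)
    have hbad : ∀ l : k, (¬ ∀ n : ℕ, IsUnit (v - algebraMap k A (l / c ^ n))) →
        ∃ m : ℕ, l = μ * c ^ m := by
      intro l hl
      push_neg at hl
      obtain ⟨m, hm⟩ := hl
      have h' : l / c ^ m = μ := key _ _ hm hn0
      rw [div_eq_iff (hcpow m)] at h'
      exact ⟨m, by rw [h', mul_comm]⟩
    by_cases h2 : ∀ n : ℕ, IsUnit (v - algebraMap k A (2 * μ / c ^ n))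
    · exact ⟨2 * μ, mul_ne_zero two_ne_zero hμ0, h2⟩
    by_cases h3 : ∀ n : ℕ, IsUnit (v - algebraMap k A (3 * μ / c ^ n))
    · exact ⟨3 * μ, mul_ne_zero three_ne_zero hμ0, h3⟩
    exfalso
    obtain ⟨a, ha⟩ := hbad _ h2
    obtain ⟨b, hb⟩ := hbad _ h3
    rw [mul_comm μ] at ha hb
    have h2a : (2 : k) = c ^ a := mul_right_cancel₀ hμ0 ha
    have h3b : (3 : k) = c ^ b := mul_right_cancel₀ hμ0 hb
    have hb0 : b ≠ 0 := by
      intro hb0; rw [hb0, pow_zero] at h3b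
      have : (3 : k) ≠ 1 := by norm_num
      exact this h3b
    have hab : (2 : k) ^ b = (3 : k) ^ a := by
      rw [h2a, h3b, ← pow_mul, ← pow_mul, mul_comm]
    have hcast : ((2 ^ b : ℕ) : k) = ((3 ^ a : ℕ) : k) := by push_cast; exact_mod_cast hab
    have hnat : (2 : ℕ) ^ b = 3 ^ a := Nat.cast_injective hcast
    have hdvd : (2 : ℕ) ∣ 3 ^ a := hnat ▸ dvd_pow_self 2 hb0
    have h23 := Nat.Prime.dvd_of_dvd_pow Nat.prime_two hdvd
    omega
  obtain ⟨l, hl0, hlu⟩ := hEx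
  -- the units c^n • v - l
  have hU : ∀ n : ℕ, IsUnit (c ^ n • v - algebraMap k A l) := by
    intro n
    have e : c ^ n • (v - algebraMap k A (l / c ^ n)) = c ^ n • v - algebraMap k A l := by
      rw [smul_sub]
      congr 1
      rw [Algebra.smul_def, ← map_mul, mul_comm, div_mul_cancel₀ l (hcpow n)]
    rw [← e, Algebra.smul_def]
    exact ((isUnit_iff_ne_zero.2 (hcpow n)).map (algebraMap k A)).mul (hlu n)
  have h0 : IsUnit (v - algebraMap k A l) := by simpa using hU 0
  set u : A := ↑h0.unit⁻¹ with hu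
  have hmain : ∀ n : ℕ, (c ^ n • v - algebraMap k A l) * (φ ^ n) u = 1 := by
    intro n
    induction n with
    | zero =>
      simp only [pow_zero, one_smul, AlgHom.one_apply]
      exact h0.mul_val_inv
    | succ n ih =>
      have e : φ (c ^ n • v - algebraMap k A l) = c ^ (n + 1) • v - algebraMap k A l := by
        rw [map_sub, map_smul, hφv, AlgHom.commutes, smul_smul, ← pow_succ]
      rw [pow_succ' φ n, AlgHom.mul_apply, ← e, ← map_mul, ih, map_one]
  -- move to the fraction field
  set K := FractionRing A with hK
  let ψ : A →ₐ[k] K := IsScalarTower.toAlgHom k A K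
  have hinjA : Function.Injective ψ := fun a b h => IsFractionRing.injective A K h
  have htrx : Transcendental k (ψ v) := by
    rw [transcendental_iff] at htr ⊢
    intro p hp
    exact htr p (hinjA (by rw [← Polynomial.aeval_algHom_apply, hp, map_zero]))
  have Hind := htrx.linearIndependent_sub_inv
  have hβ : Function.Injective fun n : ℕ => l / c ^ (n + 1) := by
    intro i j h
    simp only at h
    rw [div_eq_div_iff (hcpow (i + 1)) (hcpow (j + 1))] at h
    have h' : c ^ (j + 1) = c ^ (i + 1) := mul_left_cancel₀ hl0 h
    have := hinj h'
    omega
  have Hind2 : LinearIndependent k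
      fun n : ℕ => (ψ v - algebraMap k K (l / c ^ (n + 1)))⁻¹ :=
    Hind.comp (fun n : ℕ => l / c ^ (n + 1)) hβ
  have hg : ∀ n : ℕ, ψ ((φ ^ (n + 1)) u) =
      (c ^ (n + 1))⁻¹ • (ψ v - algebraMap k K (l / c ^ (n + 1)))⁻¹ := by
    intro n
    have h1 := congrArg ψ (hmain (n + 1))
    rw [map_mul, map_one, map_sub, map_smul, AlgHom.commutes] at h1
    have h2 : ψ ((φ ^ (n + 1)) u) = (c ^ (n + 1) • ψ v - algebraMap k K l)⁻¹ :=
      eq_inv_of_mul_eq_one_right h1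
    have h3 : c ^ (n + 1) • ψ v - algebraMap k K l =
        c ^ (n + 1) • (ψ v - algebraMap k K (l / c ^ (n + 1))) := by
      rw [smul_sub]
      congr 1
      rw [Algebra.smul_def, ← map_mul, mul_comm, div_mul_cancel₀ l (hcpow (n + 1))]
    rw [h2, h3, Algebra.smul_def, mul_inv, ← map_inv₀, ← Algebra.smul_def]
  have Hsm : LinearIndependent k fun n : ℕ => ψ ((φ ^ (n + 1)) u) := by
    have hsc := Hind2.units_smul fun n => (Units.mk0 (c ^ (n + 1)) (hcpow (n + 1)))⁻¹
    have heq : (fun n : ℕ => ψ ((φ ^ (n + 1)) u)) =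
        ((fun n => (Units.mk0 (c ^ (n + 1)) (hcpow (n + 1)))⁻¹) •
          fun n : ℕ => (ψ v - algebraMap k K (l / c ^ (n + 1)))⁻¹) := by
      funext n
      rw [hg n]
      simp [Units.smul_def]
    rw [heq]
    exact hsc
  have Hfinal : LinearIndependent k fun n : ℕ => (φ ^ (n + 1)) u :=
    LinearIndependent.of_comp ψ.toLinearMap Hsm
  -- contradiction with local finiteness
  set N := Submodule.span k (Set.range fun m : ℕ => (φ ^ (m + 1)) u) with hN
  haveI : Module.Finite k N := Module.Finite.iff_fg.2 (hlf u)
  haveI : IsNoetherian k N := isNoetherian_of_isNoetherianRing_of_finite k N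
  let f' : ℕ → N := fun n => ⟨(φ ^ (n + 1)) u, Submodule.subset_span ⟨n, rfl⟩⟩
  have hf' : LinearIndependent k f' :=
    LinearIndependent.of_comp N.subtype Hfinal
  haveI : Finite ℕ := hf'.finite_of_isNoetherian
  exact not_finite ℕ
end

section
/- Let A be a local integral domain containing a field k of characteristic zero and φ a locally finite k-algebra endomorphism of A. If φ(v) = c·v with v ≠ 0 and c ∈ k nonzero, then there is no w ∈ A linearly independent from v over k with φ(w) = c·w + v. -/
/-!
Local finiteness enters only through units: if `t * s = 1`, the elements `φ^(m+1) t` satisfy a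
nontrivial finite linear relation, and multiplying it by `∏ φ^(m+1) s` gives a polynomial
relation among the `φ^(m+1) s`. In a local ring `θ + x` is a unit for `θ = 0` or `θ = 1`.

If `v` is a unit, `u = w v⁻¹` satisfies `φ u = u + c⁻¹`. Taking `s = θ + u` makes `u` algebraic
over `k`, yet its orbit `u + m c⁻¹` is an infinite set of roots of one nonzero polynomial.

If `v` is not a unit, it is transcendental over `k`, and `s = θ + w` gives a nonzero `P(X, Y)`
with `P(v, w) = 0`. The polynomials vanishing at `(v, w)` are stable under
`p(X, Y) ↦ p(cX, cY + X)`. For a nonzero such `p` of lexicographically minimal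
(`Y`-degree `n`, `X`-degree `D` of the leading coefficient), `p(cX, cY + X) - c^(n+D) p` is
smaller, hence zero. Comparing the coefficients of `Y^(n-1) X^(D+1)` in this eigenvector
equation gives `n c^(n+D-1) g = 0`, with `g ≠ 0` the top coefficient of `p`; so `n = 0` in
characteristic zero, and `v` would be algebraic.
-/

open Polynomial

namespace Polynomial

variable {R : Type*} [CommRing R]

theorem taylor_coeff_of_natDegree_le_succ {f : R[X]} {n : ℕ} (hf : f.natDegree ≤ n + 1)
    (r : R) : (taylor r f).coeff n = f.coeff n + (n + 1) * f.coeff (n + 1) * r := by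
  have hdeg : (hasseDeriv n f).natDegree < 2 := by
    have := natDegree_hasseDeriv_le f n; omega
  rw [taylor_coeff, eval_eq_sum_range' hdeg]
  simp [Finset.sum_range_succ, hasseDeriv_coeff, add_comm 1 n]

/-- `jordanSubst c p` is `p(cX, cY + X)`, where `Y` is the outer variable of `p ∈ R[X][Y]`. -/
noncomputable def jordanSubst (c : R) (p : R[X][X]) : R[X][X] :=
  (taylor (X : R[X]) (p.map (compRingHom (C c * X)))).comp (C (C c) * X)

theorem coeff_jordanSubst_of_natDegree_lt (c : R) {p : R[X][X]} {n : ℕ} (h : p.natDegree < n) :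
    (jordanSubst c p).coeff n = 0 := by
  rw [jordanSubst, comp_C_mul_X_coeff, coeff_eq_zero_of_natDegree_lt, zero_mul]
  rw [natDegree_taylor]
  exact natDegree_map_le.trans_lt h

theorem coeff_jordanSubst_of_natDegree_le_succ (c : R) {p : R[X][X]} {n : ℕ}
    (h : p.natDegree ≤ n + 1) :
    (jordanSubst c p).coeff n = C (c ^ n) * ((p.coeff n).comp (C c * X) +
      ((n : R[X]) + 1) * (p.coeff (n + 1)).comp (C c * X) * X) := by
  rw [jordanSubst, comp_C_mul_X_coeff,
    taylor_coeff_of_natDegree_le_succ (natDegree_map_le.trans h)]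
  simp only [coeff_map, coe_compRingHom_apply, C_pow]
  ring

theorem coeff_coeff_jordanSubst_of_natDegree_le (c : R) {p : R[X][X]} {n : ℕ}
    (h : p.natDegree ≤ n) (j : ℕ) :
    ((jordanSubst c p).coeff n).coeff j = c ^ (n + j) * (p.coeff n).coeff j := by
  rw [coeff_jordanSubst_of_natDegree_le_succ c (h.trans n.le_succ),
    coeff_eq_zero_of_natDegree_lt (h.trans_lt n.lt_succ_self)]
  simp only [zero_comp, mul_zero, zero_mul, add_zero, coeff_C_mul, comp_C_mul_X_coeff]
  ring

theorem coeff_coeff_jordanSubst_succ (c : R) {p : R[X][X]} {n : ℕ}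
    (h : p.natDegree ≤ n + 1) (j : ℕ) :
    ((jordanSubst c p).coeff n).coeff (j + 1) = c ^ (n + j + 1) * (p.coeff n).coeff (j + 1) +
      (n + 1) * c ^ (n + j) * (p.coeff (n + 1)).coeff j := by
  rw [coeff_jordanSubst_of_natDegree_le_succ c h, coeff_C_mul, coeff_add, mul_assoc,
    ← C_eq_natCast, ← C_1, ← C_add, coeff_C_mul, coeff_mul_X, comp_C_mul_X_coeff,
    comp_C_mul_X_coeff]
  ring

section Field

variable {k : Type*} [Field k]

theorem natDegree_eq_zero_of_jordanSubst_eq_smul [CharZero k] {c : k} (hc : c ≠ 0)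
    {p : k[X][X]} {μ : k} (h : jordanSubst c p = μ • p) : p.natDegree = 0 := by
  rcases hn : p.natDegree with _ | n
  · rfl
  exfalso
  set D := (p.coeff (n + 1)).natDegree
  have hlead : (p.coeff (n + 1)).coeff D ≠ 0 := by
    have hp : p ≠ 0 := by rintro rfl; simp at hn
    rw [coeff_natDegree, leadingCoeff_ne_zero, ← hn]
    exact leadingCoeff_ne_zero.mpr hp
  have htop := congrArg (fun q : k[X][X] ↦ (q.coeff (n + 1)).coeff D) h
  have hnext := congrArg (fun q : k[X][X] ↦ (q.coeff n).coeff (D + 1)) h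
  simp only [coeff_smul, smul_eq_mul] at htop hnext
  rw [coeff_coeff_jordanSubst_of_natDegree_le c hn.le] at htop
  rw [coeff_coeff_jordanSubst_succ c hn.le] at hnext
  obtain rfl : μ = c ^ (n + 1 + D) := (mul_right_cancel₀ hlead htop).symm
  have : ((n : k) + 1) * c ^ (n + D) * (p.coeff (n + 1)).coeff D = 0 := by
    linear_combination hnext
  exact mul_ne_zero (mul_ne_zero n.cast_add_one_ne_zero (pow_ne_zero _ hc)) hlead this

theorem lex_natDegree_lt_of_eq_jordanSubst_sub_smul (c : k) {p q : k[X][X]}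
    (hq : q = jordanSubst c p - c ^ (p.natDegree + p.leadingCoeff.natDegree) • p)
    (hq0 : q ≠ 0) :
    Prod.Lex (· < ·) (· < ·) (q.natDegree, q.leadingCoeff.natDegree)
      (p.natDegree, p.leadingCoeff.natDegree) := by
  set n := p.natDegree
  set D := p.leadingCoeff.natDegree
  have hq_high : ∀ i, n < i → q.coeff i = 0 := fun i hi ↦ by
    simp [hq, coeff_jordanSubst_of_natDegree_lt c hi, coeff_eq_zero_of_natDegree_lt hi]
  have hq_top : ∀ j, D ≤ j → (q.coeff n).coeff j = 0 := fun j hj ↦ by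
    rw [hq, coeff_sub, coeff_sub, coeff_coeff_jordanSubst_of_natDegree_le c le_rfl, coeff_smul,
      coeff_smul, smul_eq_mul]
    rcases hj.eq_or_lt with rfl | hj
    · ring
    · rw [← leadingCoeff, coeff_eq_zero_of_natDegree_lt hj]; ring
  have hqn : q.natDegree ≤ n := natDegree_le_iff_coeff_eq_zero.mpr hq_high
  rcases hqn.lt_or_eq with hlt | heq
  · exact Prod.Lex.left _ _ hlt
  · rw [heq]
    refine Prod.Lex.right _ ?_
    by_contra! hD
    have h := hq_top _ hD
    rw [← heq, ← leadingCoeff, coeff_natDegree, leadingCoeff_eq_zero, leadingCoeff_eq_zero]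
      at h
    exact hq0 h

theorem exists_ne_zero_natDegree_eq_zero_of_jordanSubst_mem [CharZero k] {c : k} (hc : c ≠ 0)
    (I : Submodule k k[X][X]) (hI : ∀ p ∈ I, jordanSubst c p ∈ I) {p : k[X][X]} (hp : p ∈ I)
    (hp0 : p ≠ 0) : ∃ q ∈ I, q ≠ 0 ∧ q.natDegree = 0 := by
  by_cases hq : jordanSubst c p - c ^ (p.natDegree + p.leadingCoeff.natDegree) • p = 0
  · exact ⟨p, hp, hp0, natDegree_eq_zero_of_jordanSubst_eq_smul hc (sub_eq_zero.mp hq)⟩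
  · exact exists_ne_zero_natDegree_eq_zero_of_jordanSubst_mem hc I hI
      (I.sub_mem (hI p hp) (I.smul_mem _ hp)) hq
termination_by (p.natDegree, p.leadingCoeff.natDegree)
decreasing_by exact lex_natDegree_lt_of_eq_jordanSubst_sub_smul c rfl hq

theorem exists_algHom_apply_eq_zero_iff [CharZero k] {c : k} (hc : c ≠ 0) (θ : k) (m₁ : ℕ) :
    ∃ Ψ : k[X][X] →ₐ[k] k[X], ∀ m : ℕ,
      Ψ (C (C θ + C ((m + 1) * c ^ m) * X) + C (C (c ^ (m + 1))) * X) = 0 ↔ m = m₁ := by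
  let ξ : k[X] := -C (c ^ (m₁ + 1))⁻¹ * (C θ + C ((m₁ + 1) * c ^ m₁) * X)
  have hξ : ∀ f d, (aeval ξ).restrictScalars k (C f + C (C d) * X) = f + C d * ξ := by
    intros; simp
  refine ⟨(aeval ξ).restrictScalars k, fun m ↦ ⟨fun h ↦ ?_, ?_⟩⟩
  · have h1 := congrArg (coeff · 1) (hξ _ _ ▸ h)
    simp only [ξ, coeff_add, coeff_C_mul, coeff_C, coeff_X_one, coeff_zero, neg_mul, coeff_neg,
      if_neg one_ne_zero, zero_add, mul_one] at h1
    have hscale :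
        c ^ (m + 1) * ((c ^ (m₁ + 1))⁻¹ * ((m₁ + 1) * c ^ m₁)) = (m₁ + 1) * c ^ m := by
      field_simp
      ring
    rw [mul_neg, hscale, ← sub_eq_add_neg, ← sub_mul, add_sub_add_right_eq_sub, mul_eq_zero,
      sub_eq_zero, Nat.cast_inj] at h1
    exact h1.resolve_right (pow_ne_zero _ hc)
  · rintro rfl
    rw [hξ]
    simp only [ξ]
    rw [neg_mul, mul_neg, ← mul_assoc, ← C_mul, mul_inv_cancel₀ (pow_ne_zero _ hc), C_1,
      one_mul, add_neg_cancel]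

end Field

end Polynomial

section LocallyFinite

variable {k A : Type*} [Field k] [CommRing A] [Algebra k A]

theorem exists_ne_zero_map_eq_zero_of_mul_eq_one {B K : Type*} [CommRing B] [Algebra k B]
    [CommRing K] [IsDomain K] [Algebra k K] (φ : A →ₐ[k] A) {s t : A} (hts : t * s = 1)
    (hlf : (Submodule.span k (Set.range fun m : ℕ ↦ (φ ^ (m + 1)) t)).FG)
    (E : B →ₐ[k] A) (G : ℕ → B) (hG : ∀ m, E (G m) = (φ ^ (m + 1)) s)
    (hsep : ∀ m₁, ∃ Ψ : B →ₐ[k] K, ∀ m, Ψ (G m) = 0 ↔ m = m₁) :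
    ∃ P : B, P ≠ 0 ∧ E P = 0 := by
  have hdep : ¬ LinearIndependent k fun m : ℕ ↦ (φ ^ (m + 1)) t := fun hli ↦ by
    obtain ⟨S, hS⟩ := hlf
    have := hli.finite_of_le_span_finite _ S (hS ▸ Submodule.subset_span)
    exact not_finite ℕ
  obtain ⟨S, α, hrel, m₁, hm₁, hα⟩ := not_linearIndependent_iff.mp hdep
  refine ⟨∑ m ∈ S, α m • ∏ m' ∈ S.erase m, G m', fun hP ↦ ?_, ?_⟩
  · obtain ⟨Ψ, hΨ⟩ := hsep m₁
    have := congrArg Ψ hP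
    rw [map_sum, Finset.sum_eq_single m₁, map_smul, map_prod, map_zero] at this
    · refine smul_ne_zero hα (Finset.prod_ne_zero_iff.mpr fun m hm ↦ ?_) this
      exact mt (hΨ m).mp (Finset.ne_of_mem_erase hm)
    · intro m _ hm
      rw [map_smul, map_prod, Finset.prod_eq_zero (Finset.mem_erase.mpr ⟨Ne.symm hm, hm₁⟩)
        ((hΨ m₁).mpr rfl), smul_zero]
    · exact absurd hm₁
  · have hterm : ∀ m ∈ S, (φ ^ (m + 1)) t * ∏ m' ∈ S, (φ ^ (m' + 1)) s =
        ∏ m' ∈ S.erase m, (φ ^ (m' + 1)) s := fun m hm ↦ by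
      rw [← Finset.mul_prod_erase S _ hm, ← mul_assoc, ← map_mul, hts, map_one, one_mul]
    calc E (∑ m ∈ S, α m • ∏ m' ∈ S.erase m, G m')
        = ∑ m ∈ S, α m • ((φ ^ (m + 1)) t * ∏ m' ∈ S, (φ ^ (m' + 1)) s) := by
          simp only [map_sum, map_smul, map_prod, hG]
          exact Finset.sum_congr rfl fun m hm ↦ by rw [hterm m hm]
      _ = 0 := by simp only [← smul_mul_assoc, ← Finset.sum_mul, hrel, zero_mul]

theorem pow_apply_eq_add_algebraMap (φ : A →ₐ[k] A) {u : A} {e : k}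
    (hu : φ u = u + algebraMap k A e) (m : ℕ) : (φ ^ m) u = u + algebraMap k A (m * e) := by
  induction m with
  | zero => simp
  | succ m ih =>
    rw [pow_succ', AlgHom.mul_apply, ih, map_add, hu, AlgHom.commutes, add_assoc, ← map_add]
    push_cast
    ring

theorem eval₂_jordanSubst (φ : A →ₐ[k] A) {v w : A} {c : k} (hφv : φ v = c • v)
    (hφw : φ w = c • w + v) (p : k[X][X]) :
    (jordanSubst c p).eval₂ (aeval (R := k) v : k[X] →+* A) w =
      φ (p.eval₂ (aeval (R := k) v : k[X] →+* A) w) := by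
  have hcoeff : (aeval (R := k) v : k[X] →+* A).comp (compRingHom (C c * X)) =
      (φ : A →+* A).comp (aeval (R := k) v) := by
    refine ringHom_ext (fun a ↦ ?_) ?_
    · simp
    · simp [hφv, Algebra.smul_def]
  rw [jordanSubst, eval₂_comp, taylor_apply, eval₂_comp, eval₂_map, hcoeff]
  change _ = (φ : A →+* A) _
  rw [hom_eval₂]
  congr 1
  simp [hφw, Algebra.smul_def]

theorem pow_succ_apply_eq_smul_add_smul (φ : A →ₐ[k] A) {v w : A} {c : k} (hφv : φ v = c • v)
    (hφw : φ w = c • w + v) (m : ℕ) :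
    (φ ^ (m + 1)) w = c ^ (m + 1) • w + ((m + 1) * c ^ m) • v := by
  induction m with
  | zero => simpa using hφw
  | succ m ih =>
    rw [pow_succ', AlgHom.mul_apply, ih, map_add, map_smul, map_smul, hφw, hφv]
    push_cast
    module

variable [IsLocalRing A]

theorem exists_isUnit_algebraMap_add (x : A) : ∃ θ : k, IsUnit (algebraMap k A θ + x) := by
  rcases IsLocalRing.isUnit_or_isUnit_one_sub_self (-x) with h | h
  · exact ⟨0, by simpa using h.neg⟩
  · exact ⟨1, by simpa [sub_eq_add_neg] using h⟩

variable [IsDomain A] [CharZero k]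

theorem apply_ne_add_algebraMap (φ : A →ₐ[k] A)
    (hlf : ∀ a : A, (Submodule.span k (Set.range fun m : ℕ ↦ (φ ^ (m + 1)) a)).FG)
    {u : A} {e : k} (he : e ≠ 0) : φ u ≠ u + algebraMap k A e := by
  intro hu
  obtain ⟨θ, hθ⟩ := exists_isUnit_algebraMap_add (k := k) u
  obtain ⟨t, hts⟩ := hθ.exists_left_inv
  obtain ⟨Q, hQ0, hQ⟩ := exists_ne_zero_map_eq_zero_of_mul_eq_one (K := k) φ hts (hlf t)
    (aeval u) (fun m ↦ X + C (θ + (m + 1) * e))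
    (fun m ↦ by
      simp only [map_add, aeval_X, aeval_C, AlgHom.commutes, pow_apply_eq_add_algebraMap φ hu]
      push_cast
      ring)
    (fun m₁ ↦ ⟨aeval (-(θ + (m₁ + 1) * e)), fun m ↦ by
      simp only [map_add, aeval_X, aeval_C, Algebra.algebraMap_self, RingHom.id_apply]
      rw [show -(θ + (m₁ + 1) * e) + (θ + (m + 1) * e) = (m - m₁) * e by ring, mul_eq_zero,
        or_iff_left he, sub_eq_zero, Nat.cast_inj]⟩)
  have horbit : ∀ m, (φ ^ m) u ∈ {x | (Q.map (algebraMap k A)).IsRoot x} := fun m ↦ by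
    rw [Set.mem_ofPred_eq, IsRoot, eval_map_algebraMap, aeval_algHom_apply, hQ, map_zero]
  have hinj : Function.Injective fun m : ℕ ↦ (φ ^ m) u := fun m m' h ↦ by
    simp only [pow_apply_eq_add_algebraMap φ hu, add_right_inj,
      (algebraMap k A).injective.eq_iff, mul_left_inj' he, Nat.cast_inj] at h
    exact h
  exact Set.infinite_of_injective_forall_mem hinj horbit
    (finite_setOfPred_isRoot (map_ne_zero hQ0))

theorem apply_ne_smul_add_of_isUnit (φ : A →ₐ[k] A)
    (hlf : ∀ a : A, (Submodule.span k (Set.range fun m : ℕ ↦ (φ ^ (m + 1)) a)).FG)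
    {v w : A} {c : k} (hc : c ≠ 0) (hv : IsUnit v) (hφv : φ v = c • v) :
    φ w ≠ c • w + v := by
  intro hφw
  obtain ⟨t, htv⟩ := hv.exists_left_inv
  have hcc : algebraMap k A c * algebraMap k A c⁻¹ = 1 := by
    rw [← map_mul, mul_inv_cancel₀ hc, map_one]
  have hφt : φ t = algebraMap k A c⁻¹ * t := by
    have h1 : φ t * φ v = 1 := by rw [← map_mul, htv, map_one]
    rw [hφv, Algebra.smul_def] at h1
    linear_combination (algebraMap k A c⁻¹ * t) * h1 -
      (φ t * algebraMap k A c * algebraMap k A c⁻¹) * htv - φ t * hcc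
  refine apply_ne_add_algebraMap φ hlf (inv_ne_zero hc) (u := w * t) ?_
  rw [map_mul, hφw, hφt, Algebra.smul_def]
  linear_combination w * t * hcc + algebraMap k A c⁻¹ * htv

theorem apply_ne_smul_add_of_not_isUnit (φ : A →ₐ[k] A)
    (hlf : ∀ a : A, (Submodule.span k (Set.range fun m : ℕ ↦ (φ ^ (m + 1)) a)).FG)
    {v w : A} {c : k} (hc : c ≠ 0) (hv0 : v ≠ 0) (hv : ¬IsUnit v) (hφv : φ v = c • v) :
    φ w ≠ c • w + v := by
  intro hφw
  have htr : Transcendental k v := fun halg ↦ hv (halg.isIntegral.isUnit hv0)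
  let E : k[X][X] →ₐ[k] A := eval₂AlgHom (aeval v) w fun _ ↦ Commute.all _ _
  obtain ⟨θ, hθ⟩ := exists_isUnit_algebraMap_add (k := k) w
  obtain ⟨t, hts⟩ := hθ.exists_left_inv
  let G : ℕ → k[X][X] := fun m ↦
    C (C θ + C ((m + 1) * c ^ m) * X) + C (C (c ^ (m + 1))) * X
  have hE : ∀ a b d : k,
      E (C (C a + C b * X) + C (C d) * X) = algebraMap k A a + b • v + d • w := by
    intros; simp [E, Algebra.smul_def]
  have hG : ∀ m, E (G m) = (φ ^ (m + 1)) (algebraMap k A θ + w) := fun m ↦ by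
    rw [hE, map_add, AlgHom.commutes, pow_succ_apply_eq_smul_add_smul φ hφv hφw]
    abel
  obtain ⟨P, hP0, hP⟩ := exists_ne_zero_map_eq_zero_of_mul_eq_one φ hts (hlf t) E G hG
    (exists_algHom_apply_eq_zero_iff hc θ)
  obtain ⟨q, hq, hq0, hq_deg⟩ := exists_ne_zero_natDegree_eq_zero_of_jordanSubst_mem hc
    (LinearMap.ker E.toLinearMap) (fun p hp ↦ by
      simp only [LinearMap.mem_ker, AlgHom.toLinearMap_apply] at hp ⊢
      simp only [E, eval₂AlgHom_apply] at hp ⊢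
      rw [eval₂_jordanSubst φ hφv hφw, hp, map_zero]) hP hP0
  rw [eq_C_of_natDegree_eq_zero hq_deg] at hq hq0
  refine htr ⟨q.coeff 0, fun h ↦ hq0 (by rw [h, C_0]), ?_⟩
  simpa [E] using hq

end LocallyFinite

theorem stmt14 (k : Type*) [Field k] [CharZero k] (A : Type*) [CommRing A] [IsDomain A]
    [IsLocalRing A] [Algebra k A] (φ : A →ₐ[k] A)
    (hlf : ∀ a : A, (Submodule.span k (Set.range fun m : ℕ => (φ ^ (m + 1)) a)).FG)
    (v : A) (c : k) (hv : v ≠ 0) (hc : c ≠ 0) (hφv : φ v = c • v) :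
    ¬ ∃ w : A, LinearIndependent k ![v, w] ∧ φ w = c • w + v := by
  rintro ⟨w, -, hφw⟩
  by_cases hvu : IsUnit v
  · exact apply_ne_smul_add_of_isUnit φ hlf hc hvu hφv hφw
  · exact apply_ne_smul_add_of_not_isUnit φ hlf hc hv hvu hφv hφw
end
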